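/- Let ζ ∈ ℚ̄ be a root of unity with ζ ≠ 1 and ζ ≠ -1, and let w ∈ ℚ̄ satisfy w² = ζ(ζ-1)(ζ-ζ²). Then (ζ, w) is a torsion point of the elliptic curve E over ℚ(ζ) defined by the equation Y² = X(X-1)(X-ζ²); moreover its coordinates ζ and w are multiplicatively dependent. -/

import Mathlib

/-!
For `t = ζ²` the curve is the Legendre curve `Y² = X(X - 1)(X - t)`, and the points with
`X² = t` are exactly the halves of the 2-torsion point `(0, 0)`: the tangent at `(ζ, w)` meets the
curve again at `(0, 0)`. Hence `(ζ, w)` has order 4, while `ζ` and `w` are dependent simply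
because `ζ` is a root of unity.
-/

open WeierstrassCurve WeierstrassCurve.Affine

namespace WeierstrassCurve

variable {R : Type*} [CommRing R]

/-- The Legendre curve `Y² = X(X - 1)(X - t)`. -/
def legendre (t : R) : WeierstrassCurve R := ⟨0, -(1 + t), 0, t, 0⟩

lemma legendre_Δ (t : R) : (legendre t).Δ = 16 * t ^ 2 * (t - 1) ^ 2 := by
  simp only [legendre, Δ, b₂, b₄, b₆, b₈]
  ring

lemma legendre_map {S : Type*} [CommRing S] (f : R →+* S) (t : R) :
    (legendre t).map f = legendre (f t) := by
  simp [legendre, map]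

lemma legendre_equation_iff (t x y : R) :
    (legendre t).toAffine.Equation x y ↔ y ^ 2 = x * (x - 1) * (x - t) := by
  rw [Affine.equation_iff]
  simp only [legendre]
  constructor <;> intro h <;> linear_combination h

lemma legendre_negY (t x y : R) : (legendre t).toAffine.negY x y = -y := by
  simp [legendre]

lemma legendre_Y_ne_negY {t x y : R} (hy : 2 * y ≠ 0) : y ≠ (legendre t).toAffine.negY x y := by
  rw [legendre_negY]
  contrapose! hy
  linear_combination hy

variable {F : Type*} [Field F] [DecidableEq F] {t x y : F}

lemma legendre_addY_self_eq_zero_of_sq_eq (hx : x ^ 2 = t) (hy : 2 * y ≠ 0)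
    (h : (legendre t).toAffine.Equation x y) :
    (legendre t).toAffine.addY x x y ((legendre t).toAffine.slope x x y y) = 0 := by
  subst hx
  rw [legendre_equation_iff] at h
  have hne := legendre_Y_ne_negY (t := x ^ 2) (x := x) hy
  have hy0 : y ≠ 0 := right_ne_zero_of_mul hy
  have hslope : (legendre (x ^ 2)).toAffine.slope x x y y = -x * (x - 1) ^ 2 / y := by
    rw [Affine.slope_of_Y_ne rfl hne, legendre_negY,
      div_eq_div_iff (by rwa [sub_neg_eq_add, ← two_mul]) hy0]
    simp only [legendre]
    ring
  -- The tangent slope `ℓ` satisfies `ℓ² = -(x - 1)²`, so the third intersection has `X = 0`.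
  rw [Affine.addY, Affine.negAddY, Affine.addX, legendre_negY, hslope]
  simp only [legendre]
  field_simp
  linear_combination (x * (x - 1) ^ 2 * (x ^ 2 - 3 * x + 1) - y ^ 2 + x ^ 2 * (x - 1) ^ 2) * h

lemma legendre_four_nsmul_eq_zero_of_sq_eq (hx : x ^ 2 = t) (hy : 2 * y ≠ 0)
    (h : (legendre t).toAffine.Nonsingular x y) :
    4 • (Point.some x y h : (legendre t).toAffine.Point) = 0 := by
  have hne := legendre_Y_ne_negY (t := t) (x := x) hy
  rw [show 4 = 2 + 2 from rfl, add_nsmul, two_nsmul, Point.add_self_of_Y_ne hne]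
  refine Point.add_self_of_Y_eq ?_
  rw [legendre_negY, legendre_addY_self_eq_zero_of_sq_eq hx hy h.1, neg_zero]

end WeierstrassCurve

open Classical in
/-- Let `ζ ≠ ±1` be a root of unity and `w` a square root of `ζ(ζ-1)(ζ-ζ²)`. Then the equation
`Y² = X(X-1)(X-ζ²)`, i.e. `Y² = X³ - (1+ζ²)X² + ζ²X`, defines an elliptic curve `E` over
`ℚ(ζ)` (its discriminant is nonzero), the point `(ζ, w)` is a torsion point of `E(ℚ̄)`, and its
coordinates `ζ` and `w` are multiplicatively dependent. -/
theorem stoll_point_is_torsion_with_mult_dep_coords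
    (ζ w : AlgebraicClosure ℚ) (hζ : ∃ m : ℕ, 0 < m ∧ ζ ^ m = 1)
    (hζ1 : ζ ≠ 1) (hζ2 : ζ ≠ -1)
    (hw : w ^ 2 = ζ * (ζ - 1) * (ζ - ζ ^ 2)) :
    ∀ z : IntermediateField.adjoin ℚ ({ζ} : Set (AlgebraicClosure ℚ)),
      (z : AlgebraicClosure ℚ) = ζ →
    ∀ W : WeierstrassCurve (IntermediateField.adjoin ℚ ({ζ} : Set (AlgebraicClosure ℚ))),
      W = ⟨0, -(1 + z ^ 2), 0, z ^ 2, 0⟩ →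
      W.Δ ≠ 0 ∧
      ∃ h : (W.baseChange (AlgebraicClosure ℚ)).toAffine.Nonsingular ζ w,
        IsOfFinAddOrder (Point.some ζ w h : (W.baseChange (AlgebraicClosure ℚ)).toAffine.Point) ∧
        ∃ a b : ℤ, (a, b) ≠ (0, 0) ∧ ζ ^ a * w ^ b = 1 := by
  obtain ⟨m, hm, hζm⟩ := hζ
  intro z hz W hW
  have hζ0 : ζ ≠ 0 := by
    rintro rfl
    simp [hm.ne'] at hζm
  have hζm1 : ζ - 1 ≠ 0 := sub_ne_zero.2 hζ1
  have hζp1 : ζ + 1 ≠ 0 := fun h => hζ2 (eq_neg_of_add_eq_zero_left h)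
  have hw0 : w ≠ 0 := by
    rintro rfl
    have : ζ ^ 2 * (ζ - 1) ^ 2 ≠ 0 := by positivity
    exact this (by linear_combination hw)
  have hWζ : W.baseChange (AlgebraicClosure ℚ) = legendre (ζ ^ 2) := by
    rw [hW]
    exact (legendre_map _ (z ^ 2)).trans (by rw [map_pow, IntermediateField.algebraMap_apply, hz])
  have hΔ : (legendre (ζ ^ 2)).Δ ≠ 0 := by
    rw [legendre_Δ, show ζ ^ 2 - 1 = (ζ - 1) * (ζ + 1) by ring]
    simp [hζ0, hζm1, hζp1]
  have hP : (legendre (ζ ^ 2)).toAffine.Nonsingular ζ w :=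
    (equation_iff_nonsingular_of_Δ_ne_zero hΔ).mp
      ((legendre_equation_iff _ _ _).mpr (by linear_combination hw))
  refine ⟨fun h => hΔ ?_, ?_⟩
  · rw [← hWζ, WeierstrassCurve.baseChange, map_Δ, h, map_zero]
  rw [hWζ]
  refine ⟨hP, isOfFinAddOrder_iff_nsmul_eq_zero.2 ⟨4, by norm_num, ?_⟩, m, 0, by simp [hm.ne'], ?_⟩
  · exact legendre_four_nsmul_eq_zero_of_sq_eq rfl (mul_ne_zero two_ne_zero hw0) hP
  · rw [zpow_natCast, zpow_zero, mul_one, hζm]
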